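/- arXiv:2209.11012 — 2 statements merged into one kernel-verified Lean document; each statement's English description precedes it below -/
import Mathlib

section
/- Suppose the positive-weight quadrature rule {(w_j, x_j)}_{j=1}^m on S^d satisfies the Marcinkiewicz–Zygmund property with constant η ∈ [0,1) for degree n. Then for every χ ∈ P_n(S^d), (1−η)‖χ‖_{L²} ≤ ‖U_n χ‖_{L²} ≤ (1+η)‖χ‖_{L²}. -/
open MeasureTheory

noncomputable section

/-- `Z(d,ℓ) = (2ℓ+d−1)·Γ(ℓ+d−1)/(Γ(d)·Γ(ℓ+1))`, the number of linearly independent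
real spherical harmonics of exact degree `ℓ` on `S^d`. -/
def Zdim (d ℓ : ℕ) : ℕ :=
  (2 * ℓ + d - 1) * Nat.factorial (ℓ + d - 2) / (Nat.factorial (d - 1) * Nat.factorial ℓ)

/-- The unit sphere `S^d = {x ∈ ℝ^{d+1} : ‖x‖₂ = 1}`. -/
abbrev Sph (d : ℕ) : Type :=
  Metric.sphere (0 : EuclideanSpace ℝ (Fin (d + 1))) 1

/-- The surface measure `ω_d` on `S^d`: the `d`-dimensional Hausdorff measure. -/
def sphMeasure (d : ℕ) : Measure (Sph d) :=
  MeasureTheory.Measure.hausdorffMeasure (d : ℝ)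

/-- The surface area `|S^d| = ∫_{S^d} dω_d`. -/
def surfArea (d : ℕ) : ℝ := (sphMeasure d Set.univ).toReal

/-- `Y : S^d → ℝ` is a spherical harmonic of degree `ℓ`: the restriction to the sphere
of a harmonic polynomial on `ℝ^{d+1}` which is homogeneous of degree `ℓ`. -/
def IsSphericalHarmonic (d ℓ : ℕ) (Y : Sph d → ℝ) : Prop :=
  ∃ p : MvPolynomial (Fin (d + 1)) ℝ,
    p.IsHomogeneous ℓ ∧
    (∑ i, MvPolynomial.pderiv i (MvPolynomial.pderiv i p)) = 0 ∧
    ∀ x : Sph d, Y x = MvPolynomial.eval (fun i => (x : EuclideanSpace ℝ (Fin (d + 1))) i) p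

/-- A complete `L²(ω_d)`-orthonormal system `{Y_{ℓ,k} : k = 1,…,Z(d,ℓ); ℓ = 0,1,2,…}`
of real spherical harmonics on `S^d`. -/
structure SHSetup (d : ℕ) where
  Y : (ℓ : ℕ) → Fin (Zdim d ℓ) → Sph d → ℝ
  harmonic : ∀ ℓ k, IsSphericalHarmonic d ℓ (Y ℓ k)
  orthonormal : ∀ (ℓ ℓ' : ℕ) (k : Fin (Zdim d ℓ)) (k' : Fin (Zdim d ℓ')),
    ∫ x, Y ℓ k x * Y ℓ' k' x ∂(sphMeasure d) =
      if ℓ = ℓ' ∧ (k : ℕ) = (k' : ℕ) then 1 else 0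
  complete : ∀ f : Sph d → ℝ, MemLp f 2 (sphMeasure d) →
    (∀ ℓ k, ∫ x, f x * Y ℓ k x ∂(sphMeasure d) = 0) → f =ᵐ[sphMeasure d] 0

variable {d : ℕ}

/-- Laplace–Fourier coefficient `f̂_{ℓ,k} = ∫_{S^d} f·Y_{ℓ,k} dω_d`. -/
def coef (S : SHSetup d) (f : Sph d → ℝ) (ℓ : ℕ) (k : Fin (Zdim d ℓ)) : ℝ :=
  ∫ x, f x * S.Y ℓ k x ∂(sphMeasure d)

/-- Membership in `P_n(S^d) = span{Y_{ℓ,k} : ℓ ≤ n}`. -/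
def inPn (S : SHSetup d) (n : ℕ) (χ : Sph d → ℝ) : Prop :=
  ∃ c : (ℓ : ℕ) → Fin (Zdim d ℓ) → ℝ,
    χ = fun x => ∑ ℓ ∈ Finset.range (n + 1), ∑ k, c ℓ k * S.Y ℓ k x

/-- `⟨f,g⟩ = ∫_{S^d} f g dω_d`. -/
def innerL2 (d : ℕ) (f g : Sph d → ℝ) : ℝ := ∫ x, f x * g x ∂(sphMeasure d)

/-- `‖f‖²_{L²}`. -/
def l2NormSq (d : ℕ) (f : Sph d → ℝ) : ℝ := ∫ x, f x ^ 2 ∂(sphMeasure d)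

/-- `‖f‖_{L²}`. -/
def l2Norm (d : ℕ) (f : Sph d → ℝ) : ℝ := Real.sqrt (l2NormSq d f)

/-- `‖f‖_∞ = sup_{x ∈ S^d} |f(x)|`. -/
def supNorm (d : ℕ) (f : Sph d → ℝ) : ℝ := ⨆ x : Sph d, |f x|

/-- The (unfettered) hyperinterpolant
`U_n f = Σ_{ℓ=0}^n Σ_{k} ⟨f, Y_{ℓ,k}⟩_m Y_{ℓ,k}`, where
`⟨f,g⟩_m = Σ_{j=1}^m w_j f(x_j) g(x_j)`. -/
def hyper (S : SHSetup d) (n m : ℕ) (w : Fin m → ℝ) (pts : Fin m → Sph d)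
    (f : Sph d → ℝ) : Sph d → ℝ := fun x =>
  ∑ ℓ ∈ Finset.range (n + 1), ∑ k,
    (∑ j, w j * f (pts j) * S.Y ℓ k (pts j)) * S.Y ℓ k x

/-- Marcinkiewicz–Zygmund property with constant `η` for degree `n`:
`|Σ_j w_j χ(x_j)² − ∫ χ² dω_d| ≤ η ∫ χ² dω_d` for all `χ ∈ P_n(S^d)`. -/
def MZProperty (S : SHSetup d) (n m : ℕ) (w : Fin m → ℝ) (pts : Fin m → Sph d)
    (η : ℝ) : Prop :=
  ∀ χ : Sph d → ℝ, inPn S n χ →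
    |∑ j, w j * χ (pts j) ^ 2 - ∫ x, χ x ^ 2 ∂(sphMeasure d)| ≤
      η * ∫ x, χ x ^ 2 ∂(sphMeasure d)

/-- `E_n(f) = inf_{χ ∈ P_n} ‖f − χ‖_∞`, the best uniform approximation error. -/
def bestUnifErr (S : SHSetup d) (n : ℕ) (f : Sph d → ℝ) : ℝ :=
  sInf {e : ℝ | ∃ χ : Sph d → ℝ, inPn S n χ ∧ e = supNorm d fun x => f x - χ x}

/-- `‖f‖²_{H^s} = Σ_ℓ Σ_k (a_ℓ)⁻¹ |f̂_{ℓ,k}|²`. -/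
def sobNormSq (S : SHSetup d) (a : ℕ → ℝ) (f : Sph d → ℝ) : ℝ :=
  ∑' ℓ : ℕ, ∑ k, (a ℓ)⁻¹ * coef S f ℓ k ^ 2

/-- The Sobolev norm `‖f‖_{H^s}` associated with the normalizing sequence `a`. -/
def sobNorm (S : SHSetup d) (a : ℕ → ℝ) (f : Sph d → ℝ) : ℝ :=
  Real.sqrt (sobNormSq S a f)

/-- Membership in the Sobolev space `H^s(S^d)` (w.r.t. the normalizing sequence `a`). -/
def memHs (S : SHSetup d) (a : ℕ → ℝ) (f : Sph d → ℝ) : Prop :=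
  MemLp f 2 (sphMeasure d) ∧ Summable fun ℓ : ℕ => ∑ k, (a ℓ)⁻¹ * coef S f ℓ k ^ 2

/-- The sequence `a` is a valid normalizing sequence for `H^s`: positive and
`a_ℓ ≍ (1+ℓ)^{−2s}`. -/
def IsNormSeq (s : ℝ) (a : ℕ → ℝ) : Prop :=
  (∀ ℓ, 0 < a ℓ) ∧ ∃ c₁ c₂ : ℝ, 0 < c₁ ∧ 0 < c₂ ∧ ∀ ℓ : ℕ,
    c₁ * (1 + (ℓ : ℝ)) ^ (-(2 * s)) ≤ a ℓ ∧ a ℓ ≤ c₂ * (1 + (ℓ : ℝ)) ^ (-(2 * s))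

/-- `x_1,…,x_m` is a QMC design for `H^s(S^d)` with constant `c`:
`|(1/m) Σ_j f(x_j) − ∫ f dω_d| ≤ c·m^{−s/d}·‖f‖_{H^s}` for all `f ∈ H^s(S^d)`. -/
def IsQMCDesign (S : SHSetup d) (s : ℝ) (a : ℕ → ℝ) (m : ℕ)
    (pts : Fin m → Sph d) (c : ℝ) : Prop :=
  ∀ f : Sph d → ℝ, Continuous f → memHs S a f →
    |(1 / (m : ℝ)) * ∑ j, f (pts j) - ∫ x, f x ∂(sphMeasure d)| ≤
      c * (m : ℝ) ^ (-(s / (d : ℝ))) * sobNorm S a f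

/-- The `L²`-orthogonal projection `P_n f = Σ_{ℓ=0}^n Σ_k ⟨f,Y_{ℓ,k}⟩ Y_{ℓ,k}`. -/
def projL2 (S : SHSetup d) (n : ℕ) (f : Sph d → ℝ) : Sph d → ℝ := fun x =>
  ∑ ℓ ∈ Finset.range (n + 1), ∑ k, coef S f ℓ k * S.Y ℓ k x

/-- `E_n(f; H^s) = inf_{χ ∈ P_n} ‖f − χ‖_{H^s}`. -/
def bestHsErr (S : SHSetup d) (a : ℕ → ℝ) (n : ℕ) (f : Sph d → ℝ) : ℝ :=
  sInf {e : ℝ | ∃ χ : Sph d → ℝ, inPn S n χ ∧ e = sobNorm S a fun x => f x - χ x}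

/-! Write `U = U_n χ`. Expanding in the orthonormal basis shows that `⟨U, ψ⟩ = ⟨χ, ψ⟩_m` for
every `ψ ∈ P_n`. With `ψ = χ`, the lower MZ bound and Cauchy–Schwarz in `L²` give
`(1 - η)‖χ‖² ≤ ⟨χ, χ⟩_m = ⟨U, χ⟩ ≤ ‖U‖ ‖χ‖`. With `ψ = U`, Cauchy–Schwarz for the discrete form
and the upper MZ bound, applied to both `χ` and `U ∈ P_n`, give
`‖U‖² = ⟨χ, U⟩_m ≤ ⟨χ, χ⟩_m^{1/2} ⟨U, U⟩_m^{1/2} ≤ (1 + η)‖χ‖ ‖U‖`. -/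

namespace SHSetup

variable (S : SHSetup d)

theorem continuous_Y (ℓ : ℕ) (k : Fin (Zdim d ℓ)) : Continuous (S.Y ℓ k) := by
  obtain ⟨p, -, -, hp⟩ := S.harmonic ℓ k
  rw [funext hp]
  exact (MvPolynomial.continuous_eval p).comp (by fun_prop)

theorem memLp_Y (ℓ : ℕ) (k : Fin (Zdim d ℓ)) : MemLp (S.Y ℓ k) 2 (sphMeasure d) := by
  refine (memLp_two_iff_integrable_sq (S.continuous_Y ℓ k).aestronglyMeasurable).2 ?_
  refine Integrable.of_integral_ne_zero ?_
  simp [sq, S.orthonormal]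

theorem integral_Y_mul_Y (p q : Σ ℓ, Fin (Zdim d ℓ)) :
    ∫ x, S.Y p.1 p.2 x * S.Y q.1 q.2 x ∂(sphMeasure d) = if p = q then 1 else 0 := by
  obtain ⟨ℓ, k⟩ := p
  obtain ⟨ℓ', k'⟩ := q
  rw [S.orthonormal]
  by_cases h : ℓ = ℓ'
  · subst h
    simp [Fin.ext_iff]
  · simp [h]

theorem innerL2_sum_mul_sum (s : Finset ℕ) (a b : (ℓ : ℕ) → Fin (Zdim d ℓ) → ℝ) :
    innerL2 d (fun x => ∑ ℓ ∈ s, ∑ k, a ℓ k * S.Y ℓ k x)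
        (fun x => ∑ ℓ ∈ s, ∑ k, b ℓ k * S.Y ℓ k x) =
      ∑ ℓ ∈ s, ∑ k, a ℓ k * b ℓ k := by
  simp_rw [innerL2, Finset.sum_sigma', Finset.sum_mul_sum]
  have hint : ∀ p q : Σ ℓ, Fin (Zdim d ℓ), Integrable
      (fun x => a p.1 p.2 * S.Y p.1 p.2 x * (b q.1 q.2 * S.Y q.1 q.2 x)) (sphMeasure d) :=
    fun p q => by
      simpa only [mul_mul_mul_comm, Pi.mul_apply] using
        (((S.memLp_Y p.1 p.2).integrable_mul (S.memLp_Y q.1 q.2)).const_mul (a p.1 p.2 * b q.1 q.2))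
  rw [integral_finsetSum _ fun p _ => integrable_finsetSum _ fun q _ => hint p q]
  refine Finset.sum_congr rfl fun p hp => ?_
  rw [integral_finsetSum _ fun q _ => hint p q]
  simp_rw [mul_mul_mul_comm, integral_const_mul, S.integral_Y_mul_Y, mul_ite, mul_one, mul_zero]
  rw [Finset.sum_ite_eq, if_pos hp]

end SHSetup

theorem Real.weighted_sum_mul_le_sqrt_mul_sqrt {ι : Type*} (s : Finset ι) {w : ι → ℝ}
    (hw : ∀ i ∈ s, 0 ≤ w i) (f g : ι → ℝ) :
    ∑ i ∈ s, w i * f i * g i ≤ √(∑ i ∈ s, w i * f i ^ 2) * √(∑ i ∈ s, w i * g i ^ 2) := by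
  have hwf : ∀ i ∈ s, 0 ≤ w i * f i ^ 2 := fun i hi => mul_nonneg (hw i hi) (sq_nonneg _)
  have hwg : ∀ i ∈ s, 0 ≤ w i * g i ^ 2 := fun i hi => mul_nonneg (hw i hi) (sq_nonneg _)
  refine (Real.le_sqrt_of_sq_le ?_).trans_eq (Real.sqrt_mul (Finset.sum_nonneg hwf) _)
  exact Finset.sum_sq_le_sum_mul_sum_of_sq_le_mul s hwf hwg fun i _ => le_of_eq (by ring)

theorem mul_le_of_mul_sq_le_mul {a x y : ℝ} (hx : 0 ≤ x) (hy : 0 ≤ y)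
    (h : a * x ^ 2 ≤ y * x) : a * x ≤ y := by
  rcases hx.eq_or_lt with rfl | hx
  · simpa using hy
  · exact le_of_mul_le_mul_right (by linarith) hx

theorem l2NormSq_eq_innerL2_self (f : Sph d → ℝ) : l2NormSq d f = innerL2 d f f := by
  simp only [l2NormSq, innerL2, sq]

theorem l2Norm_nonneg (f : Sph d → ℝ) : 0 ≤ l2Norm d f := Real.sqrt_nonneg _

theorem sq_l2Norm (f : Sph d → ℝ) : l2Norm d f ^ 2 = ∫ x, f x ^ 2 ∂(sphMeasure d) :=
  Real.sq_sqrt (integral_nonneg fun x => sq_nonneg (f x))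

theorem innerL2_le_l2Norm_mul_l2Norm {S : SHSetup d} {n : ℕ} {f g : Sph d → ℝ}
    (hf : inPn S n f) (hg : inPn S n g) : innerL2 d f g ≤ l2Norm d f * l2Norm d g := by
  obtain ⟨a, rfl⟩ := hf
  obtain ⟨b, rfl⟩ := hg
  simp_rw [l2Norm, l2NormSq_eq_innerL2_self, S.innerL2_sum_mul_sum, Finset.sum_sigma']
  simpa only [sq] using
    Real.sum_mul_le_sqrt_mul_sqrt _ (fun p : Σ ℓ, Fin (Zdim d ℓ) => a p.1 p.2)
      (fun p => b p.1 p.2)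

theorem hyper_mem_inPn (S : SHSetup d) (n m : ℕ) (w : Fin m → ℝ) (pts : Fin m → Sph d)
    (f : Sph d → ℝ) : inPn S n (hyper S n m w pts f) :=
  ⟨_, rfl⟩

theorem innerL2_hyper {S : SHSetup d} {n : ℕ} (m : ℕ) (w : Fin m → ℝ) (pts : Fin m → Sph d)
    (f : Sph d → ℝ) {ψ : Sph d → ℝ} (hψ : inPn S n ψ) :
    innerL2 d (hyper S n m w pts f) ψ = ∑ j, w j * f (pts j) * ψ (pts j) := by
  obtain ⟨c, rfl⟩ := hψ
  unfold hyper
  rw [S.innerL2_sum_mul_sum]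
  simp_rw [Finset.sum_mul, Finset.mul_sum]
  rw [Finset.sum_comm]
  refine Finset.sum_congr rfl fun ℓ _ => ?_
  rw [Finset.sum_comm]
  exact Finset.sum_congr rfl fun j _ => Finset.sum_congr rfl fun k _ => by ring

section Hyperinterpolation

variable {S : SHSetup d} {n m : ℕ} {w : Fin m → ℝ} {pts : Fin m → Sph d} {η : ℝ}
  {χ : Sph d → ℝ}

theorem MZProperty.le_sum (hMZ : MZProperty S n m w pts η) (hχ : inPn S n χ) :
    (1 - η) * l2Norm d χ ^ 2 ≤ ∑ j, w j * χ (pts j) ^ 2 := by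
  have h := (abs_le.mp (hMZ χ hχ)).1
  rw [← sq_l2Norm] at h
  linarith

theorem MZProperty.sum_le (hMZ : MZProperty S n m w pts η) (hχ : inPn S n χ) :
    ∑ j, w j * χ (pts j) ^ 2 ≤ (1 + η) * l2Norm d χ ^ 2 := by
  have h := (abs_le.mp (hMZ χ hχ)).2
  rw [← sq_l2Norm] at h
  linarith

theorem one_sub_mul_l2Norm_le_l2Norm_hyper (hMZ : MZProperty S n m w pts η)
    (hχ : inPn S n χ) : (1 - η) * l2Norm d χ ≤ l2Norm d (hyper S n m w pts χ) := by
  set U := hyper S n m w pts χ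
  refine mul_le_of_mul_sq_le_mul (l2Norm_nonneg χ) (l2Norm_nonneg U) ?_
  calc (1 - η) * l2Norm d χ ^ 2 ≤ ∑ j, w j * χ (pts j) ^ 2 := hMZ.le_sum hχ
    _ = innerL2 d U χ := by rw [innerL2_hyper m w pts χ hχ]; simp only [mul_assoc, sq]
    _ ≤ l2Norm d U * l2Norm d χ :=
        innerL2_le_l2Norm_mul_l2Norm (hyper_mem_inPn S n m w pts χ) hχ

theorem l2Norm_hyper_le (hw : ∀ j, 0 ≤ w j) (hη : 0 ≤ η) (hMZ : MZProperty S n m w pts η)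
    (hχ : inPn S n χ) : l2Norm d (hyper S n m w pts χ) ≤ (1 + η) * l2Norm d χ := by
  set U := hyper S n m w pts χ
  have hU : inPn S n U := hyper_mem_inPn S n m w pts χ
  have hχ0 := l2Norm_nonneg χ
  have hU0 := l2Norm_nonneg U
  rw [← one_mul (l2Norm d U)]
  refine mul_le_of_mul_sq_le_mul hU0 (by positivity) ?_
  calc 1 * l2Norm d U ^ 2 = ∑ j, w j * χ (pts j) * U (pts j) := by
        rw [one_mul, sq_l2Norm, ← l2NormSq, l2NormSq_eq_innerL2_self, innerL2_hyper m w pts χ hU]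
    _ ≤ √(∑ j, w j * χ (pts j) ^ 2) * √(∑ j, w j * U (pts j) ^ 2) :=
        Real.weighted_sum_mul_le_sqrt_mul_sqrt _ (fun j _ => hw j) _ _
    _ ≤ √((1 + η) * l2Norm d χ ^ 2) * √((1 + η) * l2Norm d U ^ 2) := by
        gcongr
        exacts [hMZ.sum_le hχ, hMZ.sum_le hU]
    _ = √(((1 + η) * l2Norm d χ * l2Norm d U) ^ 2) := by
        rw [← Real.sqrt_mul (by positivity)]
        ring_nf
    _ = (1 + η) * l2Norm d χ * l2Norm d U := Real.sqrt_sq (by positivity)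

end Hyperinterpolation

theorem statement3_general (d : ℕ) (S : SHSetup d)
    (n m : ℕ) (w : Fin m → ℝ) (hw : ∀ j, 0 < w j) (pts : Fin m → Sph d)
    (η : ℝ) (hη0 : 0 ≤ η) (hMZ : MZProperty S n m w pts η)
    (χ : Sph d → ℝ) (hχ : inPn S n χ) :
    (1 - η) * l2Norm d χ ≤ l2Norm d (hyper S n m w pts χ) ∧
    l2Norm d (hyper S n m w pts χ) ≤ (1 + η) * l2Norm d χ :=
  ⟨one_sub_mul_l2Norm_le_l2Norm_hyper hMZ hχ, l2Norm_hyper_le (fun j => (hw j).le) hη0 hMZ hχ⟩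

/-- Lemma 3.1(b): under the Marcinkiewicz–Zygmund property with
constant `η ∈ [0,1)` for degree `n`, for every `χ ∈ P_n(S^d)` one has
`(1−η)‖χ‖_{L²} ≤ ‖U_n χ‖_{L²} ≤ (1+η)‖χ‖_{L²}`. -/
theorem statement3 (d : ℕ) (hd : 2 ≤ d) (S : SHSetup d)
    (n m : ℕ) (w : Fin m → ℝ) (hw : ∀ j, 0 < w j) (pts : Fin m → Sph d)
    (η : ℝ) (hη0 : 0 ≤ η) (hη1 : η < 1) (hMZ : MZProperty S n m w pts η)
    (χ : Sph d → ℝ) (hχ : inPn S n χ) :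
    (1 - η) * l2Norm d χ ≤ l2Norm d (hyper S n m w pts χ) ∧
    l2Norm d (hyper S n m w pts χ) ≤ (1 + η) * l2Norm d χ :=
  statement3_general d S n m w hw pts η hη0 hMZ χ hχ
end
end

section
/- Let f ∈ C(S^d) and suppose the m-point positive-weight quadrature rule {(w_j, x_j)}_{j=1}^m satisfies the Marcinkiewicz–Zygmund property with constant η ∈ [0,1) for degree n. Then the unfettered hyperinterpolant satisfies the stability bound ‖U_n f‖_{L²} ≤ √(1+η) · (Σ_{j=1}^m w_j)^{1/2} · ‖f‖_∞. -/
open MeasureTheory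

noncomputable section

variable {d : ℕ}

/-! For `U = U_n f` the coefficients of `U` are the discrete inner products
`⟨f, Y_{ℓ,k}⟩_m`, so orthonormality gives `‖U‖²_{L²} = Σ |⟨f, Y_{ℓ,k}⟩_m|² = ⟨f, U⟩_m`.
The Cauchy–Schwarz inequality for `⟨·,·⟩_m` bounds this by `⟨f, f⟩_m^{1/2} ⟨U, U⟩_m^{1/2}`,
where `⟨f, f⟩_m ≤ ‖f‖²_∞ Σ_j w_j` and, since `U ∈ P_n`, the Marcinkiewicz–Zygmund property
gives `⟨U, U⟩_m ≤ (1 + η) ‖U‖²_{L²}`. Dividing by `‖U‖_{L²}` gives the bound. -/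

open Finset

theorem memLp_two_of_integral_mul_self_ne_zero {α : Type*} [MeasurableSpace α] {μ : Measure α}
    {f : α → ℝ} (hf : AEStronglyMeasurable f μ) (h : ∫ x, f x * f x ∂μ ≠ 0) : MemLp f 2 μ :=
  (memLp_two_iff_integrable_sq hf).2 <| by
    simpa only [sq] using Integrable.of_integral_ne_zero h

theorem integral_sq_sum_of_orthonormal {α ι : Type*} [MeasurableSpace α] [DecidableEq ι]
    {μ : Measure α} {Y : ι → α → ℝ} (hY : ∀ i, MemLp (Y i) 2 μ)
    (horth : ∀ i j, ∫ x, Y i x * Y j x ∂μ = if i = j then 1 else 0) (s : Finset ι) (c : ι → ℝ) :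
    ∫ x, (∑ i ∈ s, c i * Y i x) ^ 2 ∂μ = ∑ i ∈ s, c i ^ 2 := by
  have hint : ∀ i j, Integrable (fun x => c i * c j * (Y i x * Y j x)) μ := fun i j =>
    ((hY i).integrable_mul (hY j)).const_mul _
  calc ∫ x, (∑ i ∈ s, c i * Y i x) ^ 2 ∂μ
      = ∫ x, ∑ i ∈ s, ∑ j ∈ s, c i * c j * (Y i x * Y j x) ∂μ := by
        congr 1 with x
        rw [sq, sum_mul_sum]
        exact sum_congr rfl fun i _ => sum_congr rfl fun j _ => by ring
    _ = ∑ i ∈ s, ∑ j ∈ s, c i * c j * ∫ x, Y i x * Y j x ∂μ := by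
        rw [integral_finsetSum _ fun i _ => integrable_finsetSum _ fun j _ => hint i j]
        exact sum_congr rfl fun i _ => by
          rw [integral_finsetSum _ fun j _ => hint i j]
          exact sum_congr rfl fun j _ => integral_const_mul _ _
    _ = ∑ i ∈ s, c i ^ 2 := by
        simp only [horth, mul_ite, mul_one, mul_zero, sum_ite_eq, sq]
        exact sum_congr rfl fun i hi => if_pos hi

theorem sum_mul_sum_mul_eq_sum_sq {ι κ : Type*} [Fintype κ] (s : Finset ι) (a : κ → ℝ)
    (Y : ι → κ → ℝ) :
    ∑ j, a j * ∑ i ∈ s, (∑ j', a j' * Y i j') * Y i j = ∑ i ∈ s, (∑ j, a j * Y i j) ^ 2 := by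
  simp only [mul_sum, sq, sum_mul]
  rw [sum_comm]
  exact sum_congr rfl fun i _ => sum_congr rfl fun j _ => sum_congr rfl fun j' _ => by ring

theorem sum_weight_mul_le_sqrt_mul_sqrt {ι : Type*} (s : Finset ι) {w : ι → ℝ}
    (hw : ∀ i, 0 ≤ w i) (a b : ι → ℝ) :
    ∑ i ∈ s, w i * a i * b i ≤ √(∑ i ∈ s, w i * a i ^ 2) * √(∑ i ∈ s, w i * b i ^ 2) := by
  convert Real.sum_mul_le_sqrt_mul_sqrt s (fun i => √(w i) * a i) (fun i => √(w i) * b i)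
    using 2 with i
  · rw [mul_mul_mul_comm, Real.mul_self_sqrt (hw i), mul_assoc]
  all_goals simp only [mul_pow, Real.sq_sqrt (hw _)]

theorem le_of_mul_self_le_mul {a b : ℝ} (hb : 0 ≤ b) (h : a * a ≤ b * a) : a ≤ b := by
  nlinarith

namespace SHSetup

variable {d : ℕ} (S : SHSetup d)

def basis (i : (ℓ : ℕ) × Fin (Zdim d ℓ)) : Sph d → ℝ := S.Y i.1 i.2

theorem continuous_basis (i : (ℓ : ℕ) × Fin (Zdim d ℓ)) : Continuous (S.basis i) := by
  obtain ⟨p, -, -, hp⟩ := S.harmonic i.1 i.2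
  rw [basis, funext hp]
  exact (MvPolynomial.continuous_eval p).comp <| continuous_pi fun i =>
    (continuous_apply i).comp ((PiLp.continuous_ofLp 2 _).comp continuous_subtype_val)

theorem integral_basis_mul_basis (i j : (ℓ : ℕ) × Fin (Zdim d ℓ)) :
    ∫ x, S.basis i x * S.basis j x ∂(sphMeasure d) = if i = j then 1 else 0 := by
  obtain ⟨ℓ, k⟩ := i
  obtain ⟨ℓ', k'⟩ := j
  rw [basis, basis, S.orthonormal]
  congr 1
  simp only [Sigma.mk.inj_iff, eq_iff_iff]
  constructor
  · rintro ⟨rfl, h⟩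
    exact ⟨rfl, heq_of_eq (Fin.ext h)⟩
  · rintro ⟨rfl, h⟩
    exact ⟨rfl, congrArg Fin.val (eq_of_heq h)⟩

theorem memLp_basis (i : (ℓ : ℕ) × Fin (Zdim d ℓ)) : MemLp (S.basis i) 2 (sphMeasure d) :=
  memLp_two_of_integral_mul_self_ne_zero (S.continuous_basis i).aestronglyMeasurable <| by
    simp [S.integral_basis_mul_basis]

end SHSetup

section Hyperinterpolation

variable {d : ℕ} (S : SHSetup d) (n m : ℕ) (w : Fin m → ℝ) (pts : Fin m → Sph d)
  (f : Sph d → ℝ)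

def degreeIndex (d n : ℕ) : Finset ((ℓ : ℕ) × Fin (Zdim d ℓ)) :=
  (range (n + 1)).sigma fun _ => univ

/-- The discrete Fourier coefficient `⟨f, Y_{ℓ,k}⟩_m` at the index `i = (ℓ, k)`. -/
def quadCoef (i : (ℓ : ℕ) × Fin (Zdim d ℓ)) : ℝ :=
  ∑ j, w j * f (pts j) * S.basis i (pts j)

theorem hyper_eq_sum_degreeIndex (x : Sph d) :
    hyper S n m w pts f x = ∑ i ∈ degreeIndex d n, quadCoef S m w pts f i * S.basis i x := by
  rw [degreeIndex, sum_sigma]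
  rfl

theorem hyper_inPn : inPn S n (hyper S n m w pts f) := ⟨_, rfl⟩

theorem l2NormSq_hyper :
    l2NormSq d (hyper S n m w pts f) = ∑ j, w j * f (pts j) * hyper S n m w pts f (pts j) := by
  simp only [l2NormSq, hyper_eq_sum_degreeIndex]
  rw [integral_sq_sum_of_orthonormal S.memLp_basis S.integral_basis_mul_basis]
  exact (sum_mul_sum_mul_eq_sum_sq _ (fun j => w j * f (pts j)) fun i j => S.basis i (pts j)).symm

end Hyperinterpolation

theorem supNorm_nonneg {d : ℕ} (f : Sph d → ℝ) : 0 ≤ supNorm d f :=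
  Real.iSup_nonneg fun _ => abs_nonneg _

theorem abs_le_supNorm {d : ℕ} {f : Sph d → ℝ} (hf : Continuous f) (x : Sph d) :
    |f x| ≤ supNorm d f :=
  le_ciSup (isCompact_range hf.abs).bddAbove x

theorem sum_weight_mul_sq_le_supNorm_sq {d m : ℕ} {f : Sph d → ℝ} (hf : Continuous f)
    {w : Fin m → ℝ} (hw : ∀ j, 0 ≤ w j) (pts : Fin m → Sph d) :
    ∑ j, w j * f (pts j) ^ 2 ≤ supNorm d f ^ 2 * ∑ j, w j := by
  rw [mul_sum]
  refine sum_le_sum fun j _ => ?_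
  rw [mul_comm, ← sq_abs]
  gcongr
  · exact hw j
  · exact abs_le_supNorm hf _

theorem statement5_general (d : ℕ) (S : SHSetup d)
    (f : Sph d → ℝ) (hf : Continuous f)
    (n m : ℕ) (w : Fin m → ℝ) (hw : ∀ j, 0 < w j) (pts : Fin m → Sph d)
    (η : ℝ) (hMZ : MZProperty S n m w pts η) :
    l2Norm d (hyper S n m w pts f) ≤
      Real.sqrt (1 + η) * Real.sqrt (∑ j, w j) * supNorm d f := by
  set U := hyper S n m w pts f
  have hw0 : ∀ j, 0 ≤ w j := fun j => (hw j).le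
  have hU0 : 0 ≤ l2NormSq d U := integral_nonneg fun _ => sq_nonneg _
  have hUm : ∑ j, w j * U (pts j) ^ 2 ≤ (1 + η) * l2NormSq d U := by
    have := (abs_le.mp (hMZ U (hyper_inPn S n m w pts f))).2
    rw [l2NormSq]
    linarith
  have hfm := sum_weight_mul_sq_le_supNorm_sq hf hw0 pts
  refine le_of_mul_self_le_mul (mul_nonneg (by positivity) (supNorm_nonneg f)) ?_
  calc l2Norm d U * l2Norm d U
      = ∑ j, w j * f (pts j) * U (pts j) := by
        rw [l2Norm, Real.mul_self_sqrt hU0, l2NormSq_hyper]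
    _ ≤ √(∑ j, w j * f (pts j) ^ 2) * √(∑ j, w j * U (pts j) ^ 2) :=
        sum_weight_mul_le_sqrt_mul_sqrt _ hw0 _ _
    _ ≤ √(supNorm d f ^ 2 * ∑ j, w j) * √((1 + η) * l2NormSq d U) := by gcongr
    _ = √(1 + η) * √(∑ j, w j) * supNorm d f * l2Norm d U := by
        rw [Real.sqrt_mul (sq_nonneg _), Real.sqrt_sq (supNorm_nonneg f),
          Real.sqrt_mul' _ hU0, l2Norm]
        ring

/-- Theorem 3.2, stability: if the positive-weight quadrature rule
satisfies the Marcinkiewicz–Zygmund property with constant `η ∈ [0,1)` for degree `n`,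
then for `f ∈ C(S^d)`: `‖U_n f‖_{L²} ≤ √(1+η)·(Σ_j w_j)^{1/2}·‖f‖_∞`. -/
theorem statement5 (d : ℕ) (hd : 2 ≤ d) (S : SHSetup d)
    (f : Sph d → ℝ) (hf : Continuous f)
    (n m : ℕ) (w : Fin m → ℝ) (hw : ∀ j, 0 < w j) (pts : Fin m → Sph d)
    (η : ℝ) (hη0 : 0 ≤ η) (hη1 : η < 1) (hMZ : MZProperty S n m w pts η) :
    l2Norm d (hyper S n m w pts f) ≤
      Real.sqrt (1 + η) * Real.sqrt (∑ j, w j) * supNorm d f :=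
  statement5_general d S f hf n m w hw pts η hMZ
end
end
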